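/- Let q, d ≥ 2 be integers. For all integers θ_w, θ_1, θ_0, the density δ(q, d; 0, θ_w, 0, θ_1, θ_0) exists; that is, the limit lim_{N→∞} (1/N)·|{n < N : θ_w·w_q(n) + θ_1·n + θ_0 ≡ 0 (mod d)}| exists. -/

import Mathlib

/-!
Write `G n = θ_w w_q(n) + θ_1 n` in `ZMod d`. From `w_q(c q^m + r) = w_q(r) + c w_q(q^m) + w_q(c)`
for `r < q^m`, and since `m ↦ G(q^m)` is an orbit of the affine map `z ↦ q z + θ_w` on a finite set,
some `P = q^K` gives `G(c P^(k+1) + r) = G r + Φ c` for all `k` and `r < P^(k+1)`.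

For such a map into a finite group the values of `Φ` form a subgroup `H`, and the value frequencies
of `G` on `[0, P^(k+1))` evolve by averaging over the translates by `Φ c`, `c < P`. Replacing `P` by a
power, every element of `H` is some `Φ c` with `c < P`; then each step shrinks the oscillation of the
frequencies on an `H`-coset by the factor `1 - |H|/P` (Doeblin), while coset sums stay fixed. Hence
on every block `[a P^k, (a+1) P^k)` the frequency of a value is close to a fixed coset average, and
cutting `[0, N)` into such blocks gives the density.
-/

open Filter

/-- `vq q n` is the `q`-adic valuation: `0` if `n = 0`, and otherwise the
largest `k` such that `q ^ k` divides `n`. -/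
noncomputable def vq (q n : ℕ) : ℕ := if n = 0 then 0 else sSup {k : ℕ | q ^ k ∣ n}

/-- `wq q n = ∑_{i=0}^n vq q i`. -/
noncomputable def wq (q n : ℕ) : ℕ := ∑ i ∈ Finset.range (n + 1), vq q i

/-- `uq q n = ∑_{i=0}^n wq q i`. -/
noncomputable def uq (q n : ℕ) : ℕ := ∑ i ∈ Finset.range (n + 1), wq q i

/-- `gamma q d tu tw t2 t1 t0 A` is the number of `n < A` with
`tu·u_q(n) + tw·w_q(n) + t2·n(n+1)/2 + t1·n + t0 ≡ 0 (mod d)`. -/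
noncomputable def gamma (q d : ℕ) (tu tw t2 t1 t0 : ℤ) (A : ℕ) : ℕ :=
  ((Finset.range A).filter fun n =>
    (tu * uq q n + tw * wq q n + t2 * (n * (n + 1) / 2 : ℕ) + t1 * n + t0) % (d : ℤ) = 0).card

open Finset Topology
open Nat (count count_add count_le count_eq_card_filter_range)

theorem Nat.count_mul (p : ℕ → Prop) [DecidablePred p] (B T : ℕ) :
    count p (B * T) = ∑ a ∈ range B, count (fun r => p (a * T + r)) T := by
  induction B with
  | zero => simp
  | succ B ih => rw [add_one_mul, count_add, ih, sum_range_succ]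

theorem abs_count_mul_sub_le {p : ℕ → Prop} [DecidablePred p] {δ ε : ℝ} {T : ℕ}
    (hblock : ∀ a, |(count (fun r => p (a * T + r)) T : ℝ) - δ * T| ≤ ε * T) (B : ℕ) :
    |(count p (B * T) : ℝ) - δ * (B * T)| ≤ ε * (B * T) := by
  rw [Nat.count_mul, Nat.cast_sum]
  calc |∑ a ∈ range B, (count (fun r => p (a * T + r)) T : ℝ) - δ * (B * T)|
      = |∑ a ∈ range B, ((count (fun r => p (a * T + r)) T : ℝ) - δ * T)| := by
        rw [sum_sub_distrib, sum_const, card_range, nsmul_eq_mul]; congr 1; ring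
    _ ≤ ∑ a ∈ range B, ε * T :=
        (abs_sum_le_sum_abs _ _).trans (sum_le_sum fun a _ => hblock a)
    _ = ε * (B * T) := by rw [sum_const, card_range, nsmul_eq_mul]; ring

theorem tendsto_count_div_of_forall_abs_count_block_sub_le {p : ℕ → Prop} [DecidablePred p]
    {δ : ℝ} (h : ∀ ε > 0, ∃ T > 0, ∀ a, |(count (fun r => p (a * T + r)) T : ℝ) - δ * T| ≤ ε * T) :
    Tendsto (fun N : ℕ => (count p N : ℝ) / N) atTop (𝓝 δ) := by
  rw [Metric.tendsto_atTop]
  intro ε hε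
  obtain ⟨T, hT, hblock⟩ := h (ε / 2) (half_pos hε)
  obtain ⟨N₀, hN₀⟩ := exists_nat_gt (2 * (1 + |δ|) * T / ε)
  refine ⟨N₀, fun N hN₀N => ?_⟩
  have hNR : 2 * (1 + |δ|) * T < ε * N := by
    rw [div_lt_iff₀ hε] at hN₀
    nlinarith [show (N₀ : ℝ) ≤ N by exact_mod_cast hN₀N]
  have hN0 : (0 : ℝ) < N := by nlinarith [abs_nonneg δ]
  set B := N / T
  set s := N % T
  have hN : N = B * T + s := by rw [mul_comm]; exact (Nat.div_add_mod N T).symm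
  have hs : (s : ℝ) < T := by exact_mod_cast Nat.mod_lt N hT
  have htail : (count (fun k => p (B * T + k)) s : ℝ) ≤ s := by exact_mod_cast count_le _
  have hBT : (B * T : ℝ) ≤ N := by exact_mod_cast (Nat.div_mul_le_self N T)
  have hNR' : (N : ℝ) = B * T + s := by exact_mod_cast hN
  have hcount : count p N = count p (B * T) + count (fun k => p (B * T + k)) s := by
    rw [hN, count_add]
  have hδs : |δ * s| ≤ |δ| * T := by
    rw [abs_mul]
    exact mul_le_mul_of_nonneg_left (by rw [abs_of_nonneg (by positivity)]; exact hs.le)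
      (abs_nonneg _)
  have key : |(count p N : ℝ) - δ * N| < ε * N := by
    rw [hcount, Nat.cast_add, abs_lt]
    obtain ⟨hB_lo, hB_hi⟩ := abs_le.mp (abs_count_mul_sub_le hblock B)
    obtain ⟨hδs_lo, hδs_hi⟩ := abs_le.mp hδs
    constructor <;> nlinarith [Nat.cast_nonneg (α := ℝ) (count (fun k => p (B * T + k)) s)]
  rw [Real.dist_eq, div_sub' hN0.ne', abs_div, abs_of_pos hN0, div_lt_iff₀ hN0, mul_comm (N : ℝ) δ]
  exact key

section Averaging

variable {M : Type*} [AddCommGroup M] {H : AddSubgroup M} [Fintype H]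

theorem AddSubgroup.sum_sub_eq_of_sub_mem {R : Type*} [AddCommMonoid R] (g : M → R) {x y : M}
    (hxy : x - y ∈ H) : ∑ h : H, g (x - h) = ∑ h : H, g (y - h) :=
  Fintype.sum_equiv (Equiv.subRight ⟨x - y, hxy⟩) _ _ fun h => by
    simp only [Equiv.subRight_apply, AddSubgroup.coe_sub]
    congr 1
    abel

theorem AddSubgroup.abs_sum_sub_sub_sum_le {ι : Type*} {g : M → ℝ} {e : ℝ}
    (hg : ∀ x y, x - y ∈ H → |g x - g y| ≤ e) {s : Finset ι} {φ : ι → M} (ψ : H → ι)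
    (hψs : ∀ h, ψ h ∈ s) (hφψ : ∀ h, φ (ψ h) = h) {x y : M} (hxy : x - y ∈ H) :
    |∑ i ∈ s, g (x - φ i) - ∑ i ∈ s, g (y - φ i)| ≤ (#s - Fintype.card H : ℕ) * e := by
  classical
  -- The digits `ψ h` give the same coset sum for `x` and `y`; only the other `#s - |H|` terms count.
  have hψ : Function.Injective ψ := fun h h' hhh' => Subtype.ext (by rw [← hφψ h, hhh', hφψ])
  set S := univ.map ⟨ψ, hψ⟩
  have hS : S ⊆ s := by
    intro i hi
    obtain ⟨h, -, rfl⟩ := Finset.mem_map.mp hi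
    exact hψs h
  have hsum_S (z : M) : ∑ i ∈ S, g (z - φ i) = ∑ h : H, g (z - h) := by
    simp [S, hφψ]
  rw [← sum_sdiff hS, ← sum_sdiff hS, hsum_S, hsum_S, H.sum_sub_eq_of_sub_mem g hxy,
    add_sub_add_right_eq_sub, ← sum_sub_distrib]
  calc |∑ i ∈ s \ S, (g (x - φ i) - g (y - φ i))| ≤ ∑ i ∈ s \ S, e :=
        (abs_sum_le_sum_abs _ _).trans <| sum_le_sum fun i _ => hg _ _ (by simpa using hxy)
    _ = #(s \ S) * e := by rw [sum_const, nsmul_eq_mul]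
    _ = _ := by rw [card_sdiff_of_subset hS, card_map, card_univ]

end Averaging

section

variable {M : Type*} [AddCommGroup M]

def BlockAdditive (P : ℕ) (f Φ : ℕ → M) : Prop :=
  ∀ k a r, r < P ^ (k + 1) → f (a * P ^ (k + 1) + r) = f r + Φ a

namespace BlockAdditive

variable {P : ℕ} {f Φ : ℕ → M}

theorem map_zero (hf : BlockAdditive P f Φ) (hP : 0 < P) : Φ 0 = 0 := by
  simpa using hf 0 0 0 (by positivity)

theorem map_mul_pow_add (hf : BlockAdditive P f Φ) (hP : 0 < P) {k a b : ℕ} (hb : b < P ^ k) :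
    Φ (a * P ^ k + b) = Φ a + Φ b := by
  have hbP : b * P < P ^ (k + 1) := by rw [pow_succ]; exact Nat.mul_lt_mul_of_pos_right hb hP
  have h := hf 0 (a * P ^ k + b) 0 (by simpa using hP)
  have hb0 := hf 0 b 0 (by simpa using hP)
  simp only [zero_add, pow_one, add_zero] at h hb0
  rw [show (a * P ^ k + b) * P = a * P ^ (k + 1) + b * P by ring, hf k a (b * P) hbP, hb0,
    add_assoc] at h
  exact (add_left_cancel h).symm.trans (add_comm _ _)

theorem pow (hf : BlockAdditive P f Φ) {L : ℕ} (hL : 0 < L) : BlockAdditive (P ^ L) f Φ := by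
  intro k a r hr
  rw [← pow_mul, ← Nat.sub_add_cancel (Nat.mul_pos hL k.succ_pos)] at hr ⊢
  exact hf _ a r hr

theorem exists_addSubgroup_coe_eq_range [Finite M] (hf : BlockAdditive P f Φ) (hP : 2 ≤ P) :
    ∃ H : AddSubgroup M, (H : Set M) = Set.range Φ := by
  refine ⟨addSubgroupOfIdempotent (Set.range Φ) (Set.range_nonempty Φ) ?_, rfl⟩
  refine (Set.subset_add_left _ (Set.mem_range.mpr ⟨0, hf.map_zero (by omega)⟩)).antisymm' ?_
  rintro _ ⟨_, ⟨a, rfl⟩, _, ⟨b, rfl⟩, rfl⟩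
  exact ⟨a * P ^ b + b, hf.map_mul_pow_add (by omega) (Nat.lt_pow_self hP)⟩

variable [DecidableEq M]

theorem count_mul_pow_add (hf : BlockAdditive P f Φ) (k a : ℕ) (x : M) :
    count (fun r => f (a * P ^ (k + 1) + r) = x) (P ^ (k + 1)) =
      count (fun r => f r = x - Φ a) (P ^ (k + 1)) := by
  simp only [count_eq_card_filter_range]
  congr 1
  exact filter_congr fun r hr => by rw [hf k a r (mem_range.mp hr), eq_sub_iff_add_eq]

end BlockAdditive

end

section

variable {M : Type*} [DecidableEq M]

noncomputable def fiberFreq (f : ℕ → M) (T : ℕ) (x : M) : ℝ := (count (f · = x) T : ℝ) / T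

theorem fiberFreq_nonneg (f : ℕ → M) (T : ℕ) (x : M) : 0 ≤ fiberFreq f T x := by
  unfold fiberFreq; positivity

theorem fiberFreq_le_one (f : ℕ → M) (T : ℕ) (x : M) : fiberFreq f T x ≤ 1 :=
  div_le_one_of_le₀ (by exact_mod_cast count_le _) T.cast_nonneg

namespace BlockAdditive

variable [AddCommGroup M] {P : ℕ} {f Φ : ℕ → M}

theorem fiberFreq_pow_succ_succ (hf : BlockAdditive P f Φ) (k : ℕ) (x : M) :
    fiberFreq f (P ^ (k + 2)) x = (∑ a ∈ range P, fiberFreq f (P ^ (k + 1)) (x - Φ a)) / P := by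
  have hcount : count (f · = x) (P ^ (k + 2)) =
      ∑ a ∈ range P, count (f · = x - Φ a) (P ^ (k + 1)) := by
    rw [pow_succ', Nat.count_mul]
    exact sum_congr rfl fun a _ => hf.count_mul_pow_add k a x
  rw [fiberFreq, hcount, show P ^ (k + 2) = P ^ (k + 1) * P by ring, Nat.cast_mul, ← div_div,
    Nat.cast_sum, sum_div]
  rfl

end BlockAdditive

end

section

variable {M : Type*} [AddCommGroup M] [DecidableEq M] {P : ℕ} {f Φ : ℕ → M}
  {H : AddSubgroup M} [Fintype H]

namespace BlockAdditive

theorem abs_fiberFreq_sub_le (hf : BlockAdditive P f Φ) (ψ : H → ℕ) (hψ : ∀ h, ψ h < P)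
    (hΦψ : ∀ h, Φ (ψ h) = h) (j : ℕ) {x y : M} (hxy : x - y ∈ H) :
    |fiberFreq f (P ^ (j + 1)) x - fiberFreq f (P ^ (j + 1)) y| ≤
      (((P - Fintype.card H : ℕ) : ℝ) / P) ^ j := by
  induction j generalizing x y with
  | zero =>
    simpa using abs_sub_le_of_nonneg_of_le (fiberFreq_nonneg ..) (fiberFreq_le_one ..)
      (fiberFreq_nonneg ..) (fiberFreq_le_one ..)
  | succ j ih =>
    have hP : (0 : ℝ) < P := by exact_mod_cast (Nat.zero_le _).trans_lt (hψ 0)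
    rw [hf.fiberFreq_pow_succ_succ, hf.fiberFreq_pow_succ_succ, ← sub_div, abs_div, Nat.abs_cast,
      pow_succ' (_ / _) j, div_mul_eq_mul_div, div_le_div_iff_of_pos_right hP]
    simpa using H.abs_sum_sub_sub_sum_le (fun x y hxy => ih hxy) ψ
      (fun h => mem_range.mpr (hψ h)) hΦψ hxy

theorem sum_fiberFreq_sub (hf : BlockAdditive P f Φ) (hP : 0 < P) (hΦ : ∀ a, Φ a ∈ H) (k : ℕ)
    (x : M) : ∑ h : H, fiberFreq f (P ^ (k + 1)) (x - h) = ∑ h : H, fiberFreq f P (x - h) := by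
  induction k with
  | zero => simp only [zero_add, pow_one]
  | succ k ih =>
    have hP' : (P : ℝ) ≠ 0 := by exact_mod_cast hP.ne'
    calc ∑ h : H, fiberFreq f (P ^ (k + 2)) (x - h)
        = (∑ a ∈ range P, ∑ h : H, fiberFreq f (P ^ (k + 1)) (x - Φ a - h)) / P := by
          simp only [hf.fiberFreq_pow_succ_succ, ← sum_div, sub_right_comm]
          rw [sum_comm]
      _ = (∑ a ∈ range P, ∑ h : H, fiberFreq f (P ^ (k + 1)) (x - h)) / P := by
          congr 1
          exact sum_congr rfl fun a _ =>
            H.sum_sub_eq_of_sub_mem _ (by simpa using H.neg_mem (hΦ a))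
      _ = ∑ h : H, fiberFreq f P (x - h) := by
          rw [sum_const, card_range, nsmul_eq_mul, mul_div_cancel_left₀ _ hP', ih]

theorem abs_fiberFreq_sub_average_le (hf : BlockAdditive P f Φ) (hΦ : ∀ a, Φ a ∈ H)
    (ψ : H → ℕ) (hψ : ∀ h, ψ h < P) (hΦψ : ∀ h, Φ (ψ h) = h) (j : ℕ) (x : M) :
    |fiberFreq f (P ^ (j + 1)) x - (∑ h : H, fiberFreq f P (x - h)) / Fintype.card H| ≤
      (((P - Fintype.card H : ℕ) : ℝ) / P) ^ j := by
  have hc : (0 : ℝ) < Fintype.card H := by exact_mod_cast Fintype.card_pos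
  rw [← hf.sum_fiberFreq_sub ((Nat.zero_le _).trans_lt (hψ 0)) hΦ j x]
  calc _ = |(∑ h : H, (fiberFreq f (P ^ (j + 1)) x - fiberFreq f (P ^ (j + 1)) (x - h))) /
        Fintype.card H| := by
        rw [sum_sub_distrib, sum_const, card_univ, nsmul_eq_mul]
        field_simp
    _ ≤ (∑ _h : H, (((P - Fintype.card H : ℕ) : ℝ) / P) ^ j) / Fintype.card H := by
        rw [abs_div, abs_of_pos hc]
        gcongr
        exact (abs_sum_le_sum_abs _ _).trans
          (sum_le_sum fun h _ => hf.abs_fiberFreq_sub_le ψ hψ hΦψ j (by simp))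
    _ = _ := by
        rw [sum_const, card_univ, nsmul_eq_mul]
        field_simp

theorem tendsto_count_div_of_section (hf : BlockAdditive P f Φ) (hΦ : ∀ a, Φ a ∈ H)
    (ψ : H → ℕ) (hψ : ∀ h, ψ h < P) (hΦψ : ∀ h, Φ (ψ h) = h) (x : M) :
    Tendsto (fun N : ℕ => (count (f · = x) N : ℝ) / N) atTop
      (𝓝 ((∑ h : H, fiberFreq f P (x - h)) / Fintype.card H)) := by
  have hP : 0 < P := (Nat.zero_le _).trans_lt (hψ 0)
  have hδ (a : ℕ) : ∑ h : H, fiberFreq f P (x - Φ a - h) = ∑ h : H, fiberFreq f P (x - h) :=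
    H.sum_sub_eq_of_sub_mem _ (by simpa using H.neg_mem (hΦ a))
  have hβ : ((P - Fintype.card H : ℕ) : ℝ) / P < 1 := by
    rw [div_lt_one (by exact_mod_cast hP)]
    exact_mod_cast Nat.sub_lt hP Fintype.card_pos
  refine tendsto_count_div_of_forall_abs_count_block_sub_le fun ε hε => ?_
  obtain ⟨j, hj⟩ := exists_pow_lt_of_lt_one hε hβ
  refine ⟨P ^ (j + 1), by positivity, fun a => ?_⟩
  have hT : (0 : ℝ) < (P ^ (j + 1) : ℕ) := by exact_mod_cast pow_pos hP _
  rw [hf.count_mul_pow_add, ← hδ a]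
  calc _ = |fiberFreq f (P ^ (j + 1)) (x - Φ a) -
        (∑ h : H, fiberFreq f P (x - Φ a - h)) / Fintype.card H| * (P ^ (j + 1) : ℕ) := by
        rw [← abs_of_pos hT, ← abs_mul, abs_of_pos hT, sub_mul, fiberFreq,
          div_mul_cancel₀ _ hT.ne']
    _ ≤ ε * (P ^ (j + 1) : ℕ) := by
        gcongr
        exact (hf.abs_fiberFreq_sub_average_le hΦ ψ hψ hΦψ j _).trans hj.le

end BlockAdditive

end

theorem BlockAdditive.exists_tendsto_count_div {M : Type*} [AddCommGroup M] [Finite M]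
    [DecidableEq M] {P : ℕ} {f Φ : ℕ → M} (hf : BlockAdditive P f Φ) (hP : 2 ≤ P) (x : M) :
    ∃ δ : ℝ, Tendsto (fun N : ℕ => (count (f · = x) N : ℝ) / N) atTop (𝓝 δ) := by
  obtain ⟨H, hH⟩ := hf.exists_addSubgroup_coe_eq_range hP
  have := Fintype.ofFinite H
  have hmem (y : M) : y ∈ H ↔ ∃ a, Φ a = y := by rw [← SetLike.mem_coe, hH, Set.mem_range]
  choose ψ hΦψ using fun h : H => (hmem h).mp h.2
  obtain ⟨B, hB⟩ := Finite.exists_le ψ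
  exact ⟨_, (hf.pow B.succ_pos).tendsto_count_div_of_section (fun a => (hmem _).mpr ⟨a, rfl⟩)
    ψ (fun h => (Nat.lt_succ_of_le (hB h)).trans (Nat.lt_pow_self hP)) hΦψ x⟩

theorem Function.exists_pos_iterate_mul_succ_eq {α : Type*} [Finite α] (F : α → α) (x : α) :
    ∃ K, 0 < K ∧ ∀ t, F^[K * (t + 1)] x = F^[K] x := by
  obtain ⟨i, j, hij, heq⟩ := Finite.exists_ne_map_eq_of_infinite fun n => F^[n] x
  wlog h : i < j generalizing i j
  · exact this j i hij.symm heq.symm (by omega)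
  have hper : IsPeriodicPt F (j - i) (F^[i] x) := by
    rw [IsPeriodicPt, IsFixedPt, ← iterate_add_apply, Nat.sub_add_cancel h.le]
    exact heq.symm
  have hK : i ≤ (j - i) * (i + 1) :=
    (Nat.le_mul_of_pos_left _ (Nat.sub_pos_of_lt h)).trans' i.le_succ
  refine ⟨(j - i) * (i + 1), Nat.mul_pos (Nat.sub_pos_of_lt h) i.succ_pos, fun t => ?_⟩
  calc F^[(j - i) * (i + 1) * (t + 1)] x
      = F^[(j - i) * (i + 1) - i] (F^[(j - i) * ((i + 1) * t)] (F^[i] x)) := by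
        rw [← iterate_add_apply, ← iterate_add_apply]
        congr 1
        zify [hK]
        ring
    _ = F^[(j - i) * (i + 1)] x := by
        rw [(hper.mul_const _).eq, ← iterate_add_apply, Nat.sub_add_cancel hK]

section Valuation

variable {q : ℕ}

theorem vq_eq_of_pow_dvd_of_not_pow_succ_dvd {n k : ℕ} (hn : n ≠ 0) (hk : q ^ k ∣ n)
    (hk' : ¬q ^ (k + 1) ∣ n) : vq q n = k := by
  rw [vq, if_neg hn]
  refine IsGreatest.csSup_eq ⟨hk, fun j hj => ?_⟩
  by_contra! hkj
  exact hk' ((pow_dvd_pow q hkj).trans hj)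

theorem vq_eq_zero_of_not_dvd {n : ℕ} (h : ¬q ∣ n) : vq q n = 0 :=
  vq_eq_of_pow_dvd_of_not_pow_succ_dvd (by rintro rfl; exact h (dvd_zero q)) (by simp)
    (by simpa using h)

theorem vq_mul_self (hq : 1 < q) {n : ℕ} (hn : n ≠ 0) : vq q (q * n) = vq q n + 1 := by
  have hfin : FiniteMultiplicity q n :=
    Nat.finiteMultiplicity_iff.mpr ⟨hq.ne', Nat.pos_of_ne_zero hn⟩
  have hmax := hfin.not_pow_dvd_of_multiplicity_lt (Nat.lt_succ_self _)
  rw [vq_eq_of_pow_dvd_of_not_pow_succ_dvd hn (pow_multiplicity_dvd q n) hmax]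
  refine vq_eq_of_pow_dvd_of_not_pow_succ_dvd (by positivity) ?_ ?_
  · rw [pow_succ']
    exact mul_dvd_mul_left q (pow_multiplicity_dvd q n)
  · rw [pow_succ']
    exact fun h => hmax (Nat.dvd_of_mul_dvd_mul_left (by omega) h)

theorem wq_zero : wq q 0 = 0 := by simp [wq, vq]

theorem wq_succ (n : ℕ) : wq q (n + 1) = wq q n + vq q (n + 1) := sum_range_succ _ _

theorem wq_mul_add_of_lt {s : ℕ} (hs : s < q) (t : ℕ) :
    wq q (q * t + s) = wq q (q * t) := by
  induction s with
  | zero => rfl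
  | succ s ih =>
    rw [← add_assoc, wq_succ, ih (by omega), vq_eq_zero_of_not_dvd, add_zero]
    intro h
    have := Nat.le_of_dvd s.succ_pos ((Nat.dvd_add_right (dvd_mul_right q t)).mp h)
    omega

theorem wq_mul_self (hq : 1 < q) (t : ℕ) : wq q (q * t) = wq q t + t := by
  induction t with
  | zero => simp [wq_zero]
  | succ t ih =>
    have h : q * (t + 1) = q * t + (q - 1) + 1 := by rw [mul_add, mul_one]; omega
    rw [h, wq_succ, wq_mul_add_of_lt (by omega), ← h, vq_mul_self hq t.succ_ne_zero, ih, wq_succ]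
    ring

theorem wq_mul_add (hq : 1 < q) {s : ℕ} (hs : s < q) (t : ℕ) : wq q (q * t + s) = wq q t + t := by
  rw [wq_mul_add_of_lt hs, wq_mul_self hq]

theorem wq_one (hq : 1 < q) : wq q 1 = 0 := by
  simpa [wq_zero] using wq_mul_add hq hq 0

theorem wq_self (hq : 1 < q) : wq q q = 1 := by
  simpa [wq_one hq] using wq_mul_add hq (by omega : 0 < q) 1

theorem wq_mul_pow_add (hq : 1 < q) (m : ℕ) {c r : ℕ} (hr : r < q ^ m) :
    wq q (c * q ^ m + r) = wq q r + c * wq q (q ^ m) + wq q c := by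
  induction m generalizing r with
  | zero =>
    obtain rfl : r = 0 := by simpa using hr
    simp [wq_zero, wq_one hq]
  | succ m ih =>
    have hq0 : 0 < q := by omega
    have hrq : r / q < q ^ m := Nat.div_lt_of_lt_mul (by rwa [← pow_succ'])
    have hsplit : c * q ^ (m + 1) + r = q * (c * q ^ m + r / q) + r % q := by
      rw [pow_succ]
      nth_rw 1 [← Nat.div_add_mod r q]
      ring
    have hr_digits : wq q r = wq q (r / q) + r / q := by
      nth_rw 1 [← Nat.div_add_mod r q]
      exact wq_mul_add hq (Nat.mod_lt r hq0) _
    have hpow : wq q (q ^ (m + 1)) = wq q (q ^ m) + q ^ m := by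
      rw [pow_succ', wq_mul_self hq]
    rw [hsplit, wq_mul_add hq (Nat.mod_lt r hq0), ih hrq, hr_digits, hpow]
    ring

end Valuation

section LinearForm

variable {R : Type*} [CommRing R] {q : ℕ}

noncomputable def wqLinear (q : ℕ) (a b : R) (n : ℕ) : R := a * wq q n + b * n

theorem wqLinear_mul_pow_add (hq : 1 < q) (a b : R) (m : ℕ) {c r : ℕ} (hr : r < q ^ m) :
    wqLinear q a b (c * q ^ m + r) =
      wqLinear q a b r + c * wqLinear q a b (q ^ m) + a * wq q c := by
  simp only [wqLinear, wq_mul_pow_add hq m hr]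
  push_cast
  ring

theorem wqLinear_pow_eq_iterate (hq : 1 < q) (a b : R) (m : ℕ) :
    wqLinear q a b (q ^ m) = (fun z => q * z + a)^[m] b := by
  induction m with
  | zero => simp [wqLinear, wq_one hq]
  | succ m ih =>
    have h := wqLinear_mul_pow_add hq a b m (c := q) (r := 0) (pow_pos (by omega) m)
    rw [Function.iterate_succ_apply', ← ih, pow_succ']
    simpa [wqLinear, wq_zero, wq_self hq] using h

theorem exists_blockAdditive_wqLinear [Finite R] (hq : 1 < q) (a b : R) :
    ∃ K, 0 < K ∧
      BlockAdditive (q ^ K) (wqLinear q a b) fun c => c * wqLinear q a b (q ^ K) + a * wq q c := by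
  obtain ⟨K, hK, hper⟩ := Function.exists_pos_iterate_mul_succ_eq (fun z : R => q * z + a) b
  refine ⟨K, hK, fun k c r hr => ?_⟩
  rw [← pow_mul] at hr ⊢
  rw [wqLinear_mul_pow_add hq a b _ hr, wqLinear_pow_eq_iterate hq, wqLinear_pow_eq_iterate hq,
    hper, add_assoc]

end LinearForm

theorem gamma_zero_zero_eq (q d : ℕ) (tw t1 t0 : ℤ) (N : ℕ) :
    gamma q d 0 tw 0 t1 t0 N =
      count (wqLinear q (tw : ZMod d) (t1 : ZMod d) · = -(t0 : ZMod d)) N := by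
  rw [gamma, count_eq_card_filter_range]
  refine congrArg card (filter_congr fun n _ => ?_)
  rw [← Int.dvd_iff_emod_eq_zero, ← ZMod.intCast_zmod_eq_zero_iff_dvd, eq_neg_iff_add_eq_zero,
    wqLinear]
  push_cast
  ring_nf

theorem stmt_8 (q d : ℕ) (hq : 2 ≤ q) (hd : 2 ≤ d) (tw t1 t0 : ℤ) :
    ∃ L : ℝ, Tendsto (fun N : ℕ => (gamma q d 0 tw 0 t1 t0 N : ℝ) / N) atTop (nhds L) := by
  have : NeZero d := ⟨by omega⟩
  obtain ⟨K, hK, hf⟩ := exists_blockAdditive_wqLinear (R := ZMod d) hq tw t1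
  obtain ⟨δ, hδ⟩ := hf.exists_tendsto_count_div (hq.trans (Nat.le_self_pow hK.ne' q)) (-t0)
  exact ⟨δ, by simpa only [gamma_zero_zero_eq] using hδ⟩
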